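/- The semiring S3 on {0,a,1} (with addition 0+x=x, a+x=a, 1+1=1, and multiplication 0·x=0, a·a=a·1=a, 1·1=1) does not satisfy the identity 1 + x + x·y + x·y = 1 + x; specifically, 1 + 1 + 1·a + 1·a = a while 1 + 1 = 1. -/
import Mathlib


inductive S3 : Type
  | zero
  | a
  | one
deriving DecidableEq

def S3.add : S3 → S3 → S3
  | .zero, x => x
  | x, .zero => x
  | .a, _ => .a
  | _, .a => .a
  | .one, .one => .one

def S3.mul : S3 → S3 → S3
  | .zero, _ => .zero
  | _, .zero => .zero
  | .a, _ => .a
  | _, .a => .a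
  | .one, .one => .one

/-- S3 does not satisfy 1 + x + x·y + x·y = 1 + x; specifically
1 + 1 + 1·a + 1·a = a while 1 + 1 = 1. -/
theorem stmt_9 :
    (¬ ∀ x y : S3,
      S3.add (S3.add (S3.add S3.one x) (S3.mul x y)) (S3.mul x y)
        = S3.add S3.one x) ∧
    S3.add (S3.add (S3.add S3.one S3.one) (S3.mul S3.one S3.a)) (S3.mul S3.one S3.a)
      = S3.a ∧
    S3.add S3.one S3.one = S3.one := by
  refine ⟨fun h => by have := h S3.one S3.a; simp [S3.add, S3.mul] at this, rfl, rfl⟩
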